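/- arXiv:2306.16038 — 10 statements merged into one kernel-verified Lean document; each statement's English description precedes it below -/
import Mathlib

section
/- Let k be an integer with 0 ≤ k ≤ m-1, and define a = (γ^(2m+6k+2) + γ^(m+3k+1) + 1)/(3γ^(m+3k+1)), b = (γ^(2m) + γ^(m+3k+1) + γ^(6k+2))/(3γ^(m+3k+1)), c = (γ^(6k+2) + γ^(3k+1) + 1)/(3γ^(3k+1)) in F_q. Then the map g : F_q → F_q given by g(x) = a·x^(2m+1) + b·x^(m+1) + c·x is a bijection of F_q, satisfies g(g(x)) = x for all x ∈ F_q, and the set {x ∈ F_q : g(x) = x} has exactly m+1 elements. -/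
/-!
Put ω = γ^m, a primitive cube root of unity, and u = γ^(3k+1). Up to the factor 1/3, the
coefficients a, b, c are the discrete Fourier transform of the values 1, u, u⁻¹ on the cube roots
of unity, so P(t) = a t² + b t + c satisfies P(1) = 1, P(ω) = u and P(ω²) = u⁻¹. For x ≠ 0 the
power x^m is a cube root of unity and g(x) = P(x^m) x. Hence g fixes the m-th roots of unity and
multiplies the classes {x^m = ω} and {x^m = ω²} by u and u⁻¹ respectively; as u^m = ω, these two
classes are exchanged, so g is an involution. Since 3 ∤ 3k+1, u ≠ 1, and the fixed points of g
are exactly 0 and the m-th roots of unity.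
-/

open Polynomial

section CubeRootsOfUnity

variable {F : Type*} [Field F] {ω : F}

theorem IsPrimitiveRoot.sq_add_self_add_one (hω : IsPrimitiveRoot ω 3) : ω ^ 2 + ω + 1 = 0 := by
  have h := hω.geom_sum_eq_zero (by norm_num)
  simp only [Finset.sum_range_succ, Finset.sum_range_zero, pow_zero, pow_one] at h
  linear_combination h

theorem IsPrimitiveRoot.eq_one_or_eq_or_eq_sq (hω : IsPrimitiveRoot ω 3) {t : F}
    (ht : t ^ 3 = 1) : t = 1 ∨ t = ω ∨ t = ω ^ 2 := by
  obtain ⟨i, hi, rfl⟩ := hω.eq_pow_of_pow_eq_one ht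
  interval_cases i <;> simp

theorem IsPrimitiveRoot.interpolation_cubeRoots (hω : IsPrimitiveRoot ω 3) {u a b c : F}
    {P : F → F} (hP : ∀ t, P t = a * t ^ 2 + b * t + c) (hu : u ≠ 0)
    (ha : a = (ω ^ 2 * u ^ 2 + ω * u + 1) / (3 * (ω * u)))
    (hb : b = (ω ^ 2 + ω * u + u ^ 2) / (3 * (ω * u)))
    (hc : c = (u ^ 2 + u + 1) / (3 * u)) :
    P 1 = 1 ∧ P ω = u ∧ P (ω ^ 2) = u⁻¹ := by
  have h3 : (3 : F) ≠ 0 := by exact_mod_cast hω.neZero'.out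
  have hω0 : ω ≠ 0 := hω.ne_zero (by norm_num)
  have hω' := hω.sq_add_self_add_one
  simp only [hP]
  subst ha hb hc
  refine ⟨?_, ?_, ?_⟩
  · field_simp
    linear_combination (u ^ 2 + 1) * hω'
  · field_simp
    linear_combination (u ^ 2 * (ω - 1) + u + 1) * hω'
  · field_simp
    linear_combination
      (u ^ 2 * (ω ^ 3 - ω ^ 2 + 1) + u * (ω ^ 2 - ω + 1) + 2 * (ω - 1)) * hω'

end CubeRootsOfUnity

theorem ncard_insert_zero_nthRootsFinset {R : Type*} [CommRing R] [IsDomain R] {m : ℕ} {ζ : R}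
    (hζ : IsPrimitiveRoot ζ m) (hm : 0 < m) :
    (insert 0 (nthRootsFinset m (1 : R) : Set R)).ncard = m + 1 := by
  have h0 : (0 : R) ∉ (nthRootsFinset m (1 : R) : Set R) := by
    simp [mem_nthRootsFinset hm, zero_pow hm.ne']
  rw [Set.ncard_insert_of_notMem h0, Set.ncard_coe_finset, hζ.card_nthRootsFinset]

theorem FiniteField.isPrimitiveRoot_of_forall_mem_zpowers {F : Type*} [Field F] [Fintype F]
    {γ : Fˣ} (hγ : ∀ x : Fˣ, x ∈ Subgroup.zpowers γ) :
    IsPrimitiveRoot (γ : F) (Fintype.card F - 1) := by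
  have hord : orderOf γ = Fintype.card F - 1 := by
    rw [orderOf_eq_card_of_forall_mem_zpowers hγ, Nat.card_units, Nat.card_eq_fintype_card]
  exact IsPrimitiveRoot.coe_units_iff.mpr (hord ▸ IsPrimitiveRoot.orderOf γ)

section TwistedMonomial

variable {F : Type*} [Field F] [Fintype F] {m : ℕ} {ω u : F} {P : F → F}

theorem pow_eq_one_or_eq_or_eq_sq (hcard : Fintype.card F = 3 * m + 1)
    (hω : IsPrimitiveRoot ω 3) {x : F} (hx : x ≠ 0) : x ^ m = 1 ∨ x ^ m = ω ∨ x ^ m = ω ^ 2 :=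
  hω.eq_one_or_eq_or_eq_sq <| by
    simpa [hcard, ← pow_mul, mul_comm] using FiniteField.pow_card_sub_one_eq_one x hx

theorem involutive_mul_pow (hcard : Fintype.card F = 3 * m + 1) (hω : IsPrimitiveRoot ω 3)
    (hum : u ^ m = ω) (hu : u ≠ 0) (hP1 : P 1 = 1) (hPω : P ω = u) (hPω2 : P (ω ^ 2) = u⁻¹) :
    Function.Involutive fun x ↦ P (x ^ m) * x := by
  intro x
  by_cases hx : x = 0
  · simp [hx]
  rcases pow_eq_one_or_eq_or_eq_sq hcard hω hx with h | h | h
  · simp only [h, hP1, one_mul]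
  · have hux : (u * x) ^ m = ω ^ 2 := by rw [mul_pow, hum, h, sq]
    simp only [h, hPω, hux, hPω2, inv_mul_cancel_left₀ hu]
  · have hux : (u⁻¹ * x) ^ m = ω := by
      rw [mul_pow, inv_pow, hum, h, sq, inv_mul_cancel_left₀ (hω.ne_zero (by norm_num))]
    simp only [h, hPω2, hux, hPω, mul_inv_cancel_left₀ hu]

theorem setOf_mul_pow_eq_self (hcard : Fintype.card F = 3 * m + 1) (hω : IsPrimitiveRoot ω 3)
    (hu1 : u ≠ 1) (hP1 : P 1 = 1) (hPω : P ω = u) (hPω2 : P (ω ^ 2) = u⁻¹) :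
    {x | P (x ^ m) * x = x} = insert 0 (nthRootsFinset m (1 : F) : Set F) := by
  have hm : 0 < m := by
    have := Fintype.one_lt_card (α := F)
    omega
  ext x
  simp only [Set.mem_ofPred_eq, Set.mem_insert_iff, Finset.mem_coe, mem_nthRootsFinset hm]
  constructor
  · intro hfix
    by_contra! ⟨hx, hx1⟩
    have hscalar : ∀ v : F, v * x = x → v = 1 := fun v hv ↦
      mul_right_cancel₀ hx (by rw [hv, one_mul])
    rcases pow_eq_one_or_eq_or_eq_sq hcard hω hx with h | h | h
    · exact hx1 h
    · exact hu1 (hscalar u (by rwa [h, hPω] at hfix))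
    · exact hu1 (inv_eq_one.mp (hscalar u⁻¹ (by rwa [h, hPω2] at hfix)))
  · rintro (rfl | h)
    · simp
    · rw [h, hP1, one_mul]

end TwistedMonomial

theorem stmt0_general (q m : ℕ) (F : Type*) [Field F] [Fintype F]
    (hq : Fintype.card F = q) (hq3 : q % 3 = 1)
    (hm : m = (q - 1) / 3)
    (γ : Fˣ) (hγ : ∀ x : Fˣ, x ∈ Subgroup.zpowers γ)
    (k : ℕ)
    (a b c : F)
    (ha : a = ((γ : F)^(2*m+6*k+2) + (γ : F)^(m+3*k+1) + 1) / (3 * (γ : F)^(m+3*k+1)))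
    (hb : b = ((γ : F)^(2*m) + (γ : F)^(m+3*k+1) + (γ : F)^(6*k+2)) / (3 * (γ : F)^(m+3*k+1)))
    (hc : c = ((γ : F)^(6*k+2) + (γ : F)^(3*k+1) + 1) / (3 * (γ : F)^(3*k+1)))
    (g : F → F)
    (hg : ∀ x : F, g x = a * x^(2*m+1) + b * x^(m+1) + c * x) :
    Function.Bijective g ∧ (∀ x : F, g (g x) = x) ∧
      {x : F | g x = x}.ncard = m + 1 := by
  have hcard : Fintype.card F = 3 * m + 1 := by omega
  have hm0 : m ≠ 0 := by
    have := Fintype.one_lt_card (α := F)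
    omega
  have hγ3m : IsPrimitiveRoot (γ : F) (3 * m) := by
    simpa [hcard] using FiniteField.isPrimitiveRoot_of_forall_mem_zpowers hγ
  set ω := (γ : F) ^ m
  set u := (γ : F) ^ (3 * k + 1)
  have hω : IsPrimitiveRoot ω 3 := by
    simpa [hm0] using hγ3m.pow_of_dvd hm0 (dvd_mul_left m 3)
  have hζ : IsPrimitiveRoot ((γ : F) ^ 3) m := by
    simpa using hγ3m.pow_of_dvd three_ne_zero (dvd_mul_right 3 m)
  have hu : u ≠ 0 := pow_ne_zero _ γ.ne_zero
  have hu1 : u ≠ 1 := fun h ↦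
    absurd (dvd_trans (dvd_mul_right 3 m) ((hγ3m.pow_eq_one_iff_dvd _).1 h)) (by omega)
  have hum : u ^ m = ω := by
    calc u ^ m = ((γ : F) ^ (3 * m)) ^ k * ω := by ring
      _ = ω := by rw [hγ3m.pow_eq_one, one_pow, one_mul]
  set P : F → F := fun t ↦ a * t ^ 2 + b * t + c
  obtain ⟨hP1, hPω, hPω2⟩ := hω.interpolation_cubeRoots (P := P) (fun _ ↦ rfl) hu
    (by rw [ha]; simp only [ω, u]; ring) (by rw [hb]; simp only [ω, u]; ring)
    (by rw [hc]; simp only [u]; ring)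
  obtain rfl : g = fun x ↦ P (x ^ m) * x := funext fun x ↦ by
    rw [hg]; simp only [P]; ring
  have hinv := involutive_mul_pow hcard hω hum hu hP1 hPω hPω2
  refine ⟨hinv.bijective, hinv, ?_⟩
  rw [setOf_mul_pow_eq_self hcard hω hu1 hP1 hPω hPω2,
    ncard_insert_zero_nthRootsFinset hζ (Nat.pos_of_ne_zero hm0)]

theorem stmt0 (q m : ℕ) (F : Type*) [Field F] [Fintype F]
    (hq : Fintype.card F = q) (hodd : Odd q) (hq3 : q % 3 = 1)
    (hm : m = (q - 1) / 3)
    (γ : Fˣ) (hγ : ∀ x : Fˣ, x ∈ Subgroup.zpowers γ)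
    (k : ℕ) (hk : k ≤ m - 1)
    (a b c : F)
    (ha : a = ((γ : F)^(2*m+6*k+2) + (γ : F)^(m+3*k+1) + 1) / (3 * (γ : F)^(m+3*k+1)))
    (hb : b = ((γ : F)^(2*m) + (γ : F)^(m+3*k+1) + (γ : F)^(6*k+2)) / (3 * (γ : F)^(m+3*k+1)))
    (hc : c = ((γ : F)^(6*k+2) + (γ : F)^(3*k+1) + 1) / (3 * (γ : F)^(3*k+1)))
    (g : F → F)
    (hg : ∀ x : F, g x = a * x^(2*m+1) + b * x^(m+1) + c * x) :
    Function.Bijective g ∧ (∀ x : F, g (g x) = x) ∧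
      {x : F | g x = x}.ncard = m + 1 :=
  stmt0_general q m F hq hq3 hm γ hγ k a b c ha hb hc g hg
end

section
/- Let k be an integer with 0 ≤ k ≤ m-1, and define a = (γ^(2m+6k+2) + γ^(m+3k+1) + 1)/(3γ^(m+3k+1)), b = (γ^(2m) + γ^(m+3k+1) + γ^(6k+2))/(3γ^(m+3k+1)), c = (γ^(6k+2) + γ^(3k+1) + 1)/(3γ^(3k+1)) in F_q, and let g(x) = a·x^(2m+1) + b·x^(m+1) + c·x. Then for every integer i with 0 ≤ i ≤ m-1 one has g(γ^(3(i+k)+2)) = γ^(3i+1). -/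
theorem stmt3 (q m : ℕ) (F : Type*) [Field F] [Fintype F]
    (hq : Fintype.card F = q) (hodd : Odd q) (hq3 : q % 3 = 1)
    (hm : m = (q - 1) / 3)
    (γ : Fˣ) (hγ : ∀ x : Fˣ, x ∈ Subgroup.zpowers γ)
    (k : ℕ) (hk : k ≤ m - 1)
    (a b c : F)
    (ha : a = ((γ : F)^(2*m+6*k+2) + (γ : F)^(m+3*k+1) + 1) / (3 * (γ : F)^(m+3*k+1)))
    (hb : b = ((γ : F)^(2*m) + (γ : F)^(m+3*k+1) + (γ : F)^(6*k+2)) / (3 * (γ : F)^(m+3*k+1)))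
    (hc : c = ((γ : F)^(6*k+2) + (γ : F)^(3*k+1) + 1) / (3 * (γ : F)^(3*k+1)))
    (g : F → F)
    (hg : ∀ x : F, g x = a * x^(2*m+1) + b * x^(m+1) + c * x) :
    ∀ i : ℕ, i ≤ m - 1 → g ((γ : F)^(3*(i+k)+2)) = (γ : F)^(3*i+1) := by
  intro i hi
  have hq7 : 7 ≤ q := by
    obtain ⟨r, hr⟩ := hodd
    have h2 : 1 < Fintype.card F := Fintype.one_lt_card
    omega
  have h3m : 3 * m = q - 1 := by omega
  have hcard : orderOf γ = q - 1 := by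
    rw [orderOf_eq_card_of_forall_mem_zpowers hγ]
    rw [Nat.card_units, Nat.card_eq_fintype_card, hq]
  have hγ3m : (γ : F) ^ (3 * m) = 1 := by
    have h : γ ^ (3 * m) = 1 := by rw [h3m, ← hcard]; exact pow_orderOf_eq_one γ
    simpa using congrArg Units.val h
  obtain ⟨ω, hω⟩ : ∃ ω : F, ω = (γ : F) ^ m := ⟨_, rfl⟩
  have hω3 : ω ^ 3 = 1 := by rw [hω, ← pow_mul, mul_comm]; exact hγ3m
  have hωne1 : ω ≠ 1 := by
    intro h
    have hu' : (γ : F) ^ m = 1 := by rw [← hω]; exact h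
    have hu : γ ^ m = 1 := Units.ext (by simpa using hu')
    have hdvd := orderOf_dvd_of_pow_eq_one hu
    rw [hcard] at hdvd
    have := Nat.le_of_dvd (by omega) hdvd
    omega
  have hsum : ω ^ 2 + ω + 1 = 0 := by
    have h : (ω - 1) * (ω ^ 2 + ω + 1) = 0 := by linear_combination hω3
    rcases mul_eq_zero.1 h with h' | h'
    · exact absurd (sub_eq_zero.1 h') hωne1
    · exact h'
  have hγ0 : (γ : F) ≠ 0 := Units.ne_zero γ
  have h3 : (3 : F) ≠ 0 := by
    intro h
    have hdvd : ringChar F ∣ 3 := (ringChar.spec F 3).1 (by exact_mod_cast h)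
    have hp : (ringChar F).Prime := CharP.char_is_prime F (ringChar F)
    have hp3 : ringChar F = 3 := (Nat.prime_dvd_prime_iff_eq hp Nat.prime_three).1 hdvd
    haveI : Fact (Nat.Prime (ringChar F)) := ⟨hp⟩
    obtain ⟨n, hn⟩ := FiniteField.card F (ringChar F)
    rw [hq, hp3] at hn
    have : 3 ∣ q := hn.2 ▸ dvd_pow_self 3 n.ne_zero
    omega
  obtain ⟨t, htdef⟩ : ∃ t : F, t = (γ : F) ^ (3 * k + 1) := ⟨_, rfl⟩
  obtain ⟨u, hudef⟩ : ∃ u : F, u = (γ : F) ^ (3 * i + 1) := ⟨_, rfl⟩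
  have ht : t ≠ 0 := htdef ▸ pow_ne_zero _ hγ0
  have hωne0 : ω ≠ 0 := hω ▸ pow_ne_zero _ hγ0
  have e1 : (γ : F) ^ (2 * m + 6 * k + 2) = ω ^ 2 * t ^ 2 := by
    rw [hω, htdef, ← pow_mul, ← pow_mul, ← pow_add]; congr 1; ring
  have e2 : (γ : F) ^ (m + 3 * k + 1) = ω * t := by
    rw [hω, htdef, ← pow_add]; congr 1
  have e3 : (γ : F) ^ (2 * m) = ω ^ 2 := by
    rw [hω, ← pow_mul]; congr 1; ring
  have e4 : (γ : F) ^ (6 * k + 2) = t ^ 2 := by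
    rw [htdef, ← pow_mul]; congr 1; ring
  have e5 : (γ : F) ^ (3 * (i + k) + 2) = u * t := by
    rw [hudef, htdef, ← pow_add]; congr 1; ring
  have e6 : ((γ : F) ^ (3 * (i + k) + 2)) ^ m = ω ^ 2 := by
    rw [← pow_mul, hω, ← pow_mul]
    have h : (3 * (i + k) + 2) * m = 3 * m * (i + k) + m * 2 := by ring
    rw [h, pow_add, pow_mul, hγ3m, one_pow, one_mul]
  have e7 : ((γ : F) ^ (3 * (i + k) + 2)) ^ (2 * m + 1)
      = ω ^ 2 * ω ^ 2 * ((γ : F) ^ (3 * (i + k) + 2)) := by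
    rw [pow_succ, mul_comm 2 m, pow_mul, e6]; ring
  have e8 : ((γ : F) ^ (3 * (i + k) + 2)) ^ (m + 1)
      = ω ^ 2 * ((γ : F) ^ (3 * (i + k) + 2)) := by
    rw [pow_succ, e6]
  have ha' : a = (ω^2*t^2 + ω*t + 1) / (3*(ω*t)) := by rw [ha, e1, e2]
  have hb' : b = (ω^2 + ω*t + t^2) / (3*(ω*t)) := by rw [hb, e2, e3, e4]
  have hc' : c = (t^2 + t + 1) / (3*t) := by rw [hc, e4, ← htdef]
  have key : (a * (ω ^ 2 * ω ^ 2) + b * ω ^ 2 + c) * t = 1 := by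
    rw [ha', hb', hc']
    field_simp
    linear_combination (t^2*(ω^3 - ω^2 + 1) + t*(ω^2 - ω + 1) + 2*ω - 2) * hsum
  rw [hg, e7, e8, e5]
  calc a * (ω ^ 2 * ω ^ 2 * (u * t)) + b * (ω ^ 2 * (u * t)) + c * (u * t)
      = (a * (ω ^ 2 * ω ^ 2) + b * ω ^ 2 + c) * t * u := by ring
    _ = u := by rw [key, one_mul]
    _ = (γ : F) ^ (3 * i + 1) := hudef
end

section
/- Let k be an integer with 0 ≤ k ≤ m-1, and define a = (γ^(2m) + γ^(m+6k+2) + γ^(3k+1))/(3γ^(m+3k+1)), b = (γ^(2m+3k+1) + γ^(m+6k+2) + 1)/(3γ^(m+3k+1)), c = (γ^(6k+2) + γ^(3k+1) + 1)/(3γ^(3k+1)) in F_q, and let g(x) = a·x^(2m+1) + b·x^(m+1) + c·x. Then for every integer i with 0 ≤ i ≤ m-1 one has g(γ^(3i+2)) = γ^(3i+2). -/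
theorem stmt9 (q m : ℕ) (F : Type*) [Field F] [Fintype F]
    (hq : Fintype.card F = q) (hodd : Odd q) (hq3 : q % 3 = 1)
    (hm : m = (q - 1) / 3)
    (γ : Fˣ) (hγ : ∀ x : Fˣ, x ∈ Subgroup.zpowers γ)
    (k : ℕ) (hk : k ≤ m - 1)
    (a b c : F)
    (ha : a = ((γ : F)^(2*m) + (γ : F)^(m+6*k+2) + (γ : F)^(3*k+1)) / (3 * (γ : F)^(m+3*k+1)))
    (hb : b = ((γ : F)^(2*m+3*k+1) + (γ : F)^(m+6*k+2) + 1) / (3 * (γ : F)^(m+3*k+1)))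
    (hc : c = ((γ : F)^(6*k+2) + (γ : F)^(3*k+1) + 1) / (3 * (γ : F)^(3*k+1)))
    (g : F → F)
    (hg : ∀ x : F, g x = a * x^(2*m+1) + b * x^(m+1) + c * x) :
    ∀ i : ℕ, i ≤ m - 1 → g ((γ : F)^(3*i+2)) = (γ : F)^(3*i+2) := by
  intro i hi
  classical
  have h2 : 2 ≤ q := hq ▸ Fintype.one_lt_card
  have h3m : 3 * m = q - 1 := by omega
  have hmpos : 0 < m := by omega
  -- 3 ≠ 0 in F
  have h3ne : (3 : F) ≠ 0 := by
    intro h3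
    have hc0 : ((q : ℕ) : F) = 0 := by rw [← hq]; exact FiniteField.cast_card_eq_zero F
    have hq' : q = 3 * (q / 3) + 1 := by omega
    rw [hq'] at hc0
    push_cast at hc0
    rw [h3, zero_mul, zero_add] at hc0
    exact one_ne_zero hc0
  -- γ^(3m) = 1
  have hγne : (γ : F) ≠ 0 := γ.ne_zero
  have hγ3m : (γ : F) ^ (3 * m) = 1 := by
    rw [h3m, ← hq]
    exact FiniteField.pow_card_sub_one_eq_one _ hγne
  -- order of γ
  have hord : orderOf γ = q - 1 := by
    rw [orderOf_eq_card_of_forall_mem_zpowers hγ, Nat.card_eq_fintype_card, Fintype.card_units, hq]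
  have hωne1 : (γ : F) ^ m ≠ 1 := by
    intro h
    have hu : γ ^ m = 1 := Units.ext (by simpa using h)
    have := orderOf_dvd_of_pow_eq_one hu
    rw [hord] at this
    have := Nat.le_of_dvd hmpos this
    omega
  set w : F := (γ : F) ^ m with hw
  set u : F := (γ : F) ^ (3 * k + 1) with hud
  have hw3 : w ^ 3 = 1 := by rw [hw, ← pow_mul, mul_comm, hγ3m]
  have hsum : w ^ 2 + w + 1 = 0 := by
    have : (w - 1) * (w ^ 2 + w + 1) = 0 := by linear_combination hw3
    rcases mul_eq_zero.mp this with h | h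
    · exact absurd (sub_eq_zero.mp h) hωne1
    · exact h
  have hwne : w ≠ 0 := pow_ne_zero _ hγne
  have hune : u ≠ 0 := pow_ne_zero _ hγne
  set t : F := (γ : F) ^ (3 * i + 2) with ht
  clear_value t
  have ht1 : t ^ (2 * m + 1) = w * t := by
    rw [ht, hw, ← pow_mul, ← pow_add]
    have e : (3 * i + 2) * (2 * m + 1) = 3 * m * (2 * i + 1) + (m + (3 * i + 2)) := by ring
    rw [e, pow_add, pow_mul, hγ3m, one_pow, one_mul]
  have ht2 : t ^ (m + 1) = w ^ 2 * t := by
    rw [ht, hw, ← pow_mul, ← pow_mul, ← pow_add]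
    have e : (3 * i + 2) * (m + 1) = 3 * m * i + (m * 2 + (3 * i + 2)) := by ring
    rw [e, pow_add, pow_mul, hγ3m, one_pow, one_mul]
  -- rewrite a b c in terms of w u
  have e1 : (γ : F) ^ (2 * m) = w ^ 2 := by
    rw [show 2 * m = m * 2 by ring, pow_mul, ← hw]
  have e2 : (γ : F) ^ (m + 6 * k + 2) = w * u ^ 2 := by
    rw [show m + 6 * k + 2 = m + (3 * k + 1) * 2 by ring, pow_add, pow_mul, ← hw, ← hud]
  have e3 : (γ : F) ^ (2 * m + 3 * k + 1) = w ^ 2 * u := by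
    rw [show 2 * m + 3 * k + 1 = m * 2 + (3 * k + 1) by ring, pow_add, pow_mul, ← hw, ← hud]
  have e4 : (γ : F) ^ (6 * k + 2) = u ^ 2 := by
    rw [show 6 * k + 2 = (3 * k + 1) * 2 by ring, pow_mul, ← hud]
  have e5 : (γ : F) ^ (m + 3 * k + 1) = w * u := by
    rw [show m + 3 * k + 1 = m + (3 * k + 1) by ring, pow_add, ← hw, ← hud]
  clear_value w u
  have hwu : (3 : F) * (w * u) ≠ 0 := by
    exact mul_ne_zero h3ne (mul_ne_zero hwne hune)
  have h3u : (3 : F) * u ≠ 0 := mul_ne_zero h3ne hune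
  have haD : a * (3 * (w * u)) = w ^ 2 + w * u ^ 2 + u := by
    rw [ha, e1, e2, e5, mul_comm w u]
    rw [show (3 : F) * (u * w) = 3 * (w * u) by ring] at *
    rw [show (3 : F) * (w * u) = 3 * (w * u) by ring]
    exact div_mul_cancel₀ _ hwu
  have hbD : b * (3 * (w * u)) = w ^ 2 * u + w * u ^ 2 + 1 := by
    rw [hb, e2, e3, e5]
    exact div_mul_cancel₀ _ hwu
  have hcD : c * (3 * u) = u ^ 2 + u + 1 := by
    rw [hc, e4]
    exact div_mul_cancel₀ _ h3u
  have key : a * w + b * w ^ 2 + c = 1 := by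
    have hmul : (a * w + b * w ^ 2 + c) * (3 * (w * u)) = 1 * (3 * (w * u)) := by
      have expand : (a * w + b * w ^ 2 + c) * (3 * (w * u))
          = w * (a * (3 * (w * u))) + w ^ 2 * (b * (3 * (w * u))) + w * (c * (3 * u)) := by
        ring
      rw [expand, haD, hbD, hcD]
      linear_combination (1 + u ^ 2 + w * u) * hw3 + (1 + u ^ 2) * hsum
    exact mul_right_cancel₀ hwu hmul
  rw [hg, ht1, ht2]
  linear_combination t * key
end

section
/- Let k be an integer with 0 ≤ k ≤ m-1, and define a = 2γ^(3k)/3, b = 1/3, c = -γ^(3k)/3 in F_q. Then the map g : F_q → F_q given by g(x) = a·x^(3m-1) + b·x^(2m+1) + c·x^(2m-1) + b·x^(m+1) + c·x^(m-1) + b·x is a bijection of F_q, satisfies g(g(x)) = x for all x ∈ F_q, and the set {x ∈ F_q : g(x) = x} has exactly m+1 elements. -/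
/-!
Put `s = γ^(3k)` and, for `x ≠ 0`, `t = x^m`, so that `t^3 = x^(q-1) = 1`. Multiplying out,
`3 x g(x) = s (2t^3 - t^2 - t) + x^2 (t^2 + t + 1)`. If `t = 1` this is `3 x^2`, so `g(x) = x`;
otherwise `t^2 + t + 1 = 0` and it is `3 s`, so `g(x) = s / x`. Since `s^m = 1`, the map
`x ↦ s / x` preserves `x^m ≠ 1`, which makes `g` an involution; and `s / x = x` would force
`x^(2m) = s^m = 1`, hence `x^m = x^(3m) / x^(2m) = 1`. So the fixed points are `0` and the `m`-th
roots of unity, of which there are `m` because `m ∣ q - 1`.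
-/

open Polynomial Finset

section

variable {F : Type*} [Field F]

-- The map `g` of the statement for `s = γ^(3k)`: `a = 2s/3`, `b = 1/3`, `c = -s/3`.
def involutionPoly (m : ℕ) (s x : F) : F :=
  2 * s / 3 * x^(3*m-1) + 1 / 3 * x^(2*m+1) + -s / 3 * x^(2*m-1) + 1 / 3 * x^(m+1)
    + -s / 3 * x^(m-1) + 1 / 3 * x

open Classical in
noncomputable def piecewiseInv (m : ℕ) (s x : F) : F :=
  if x = 0 ∨ x ^ m = 1 then x else s / x

lemma mul_involutionPoly {m : ℕ} (hm : 0 < m) (s x : F) :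
    x * involutionPoly m s x = s / 3 * (2 * (x ^ m) ^ 3 - (x ^ m) ^ 2 - x ^ m)
      + x ^ 2 / 3 * ((x ^ m) ^ 2 + x ^ m + 1) := by
  obtain ⟨n, rfl⟩ : ∃ n, m = n + 1 := ⟨m - 1, by omega⟩
  simp only [involutionPoly, show 3 * (n + 1) - 1 = 3 * n + 2 by omega,
    show 2 * (n + 1) - 1 = 2 * n + 1 by omega, Nat.add_sub_cancel]
  ring

lemma involutionPoly_zero {m : ℕ} (hm : 2 ≤ m) (s : F) : involutionPoly m s 0 = 0 := by
  simp [involutionPoly, zero_pow, show m - 1 ≠ 0 by omega, show 2 * m - 1 ≠ 0 by omega,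
    show 3 * m - 1 ≠ 0 by omega]

lemma involutionPoly_of_pow_eq_one (h3 : (3 : F) ≠ 0) {m : ℕ} (hm : 0 < m) (s : F) {x : F}
    (hx : x ≠ 0) (hxm : x ^ m = 1) : involutionPoly m s x = x := by
  refine mul_left_cancel₀ hx ?_
  rw [mul_involutionPoly hm, hxm]
  field_simp
  ring

lemma involutionPoly_of_sq_add_add_one_eq_zero (h3 : (3 : F) ≠ 0) {m : ℕ} (hm : 0 < m) (s : F)
    {x : F} (hx : x ≠ 0) (hxm : (x ^ m) ^ 2 + x ^ m + 1 = 0) : involutionPoly m s x = s / x := by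
  refine mul_left_cancel₀ hx ?_
  have hcube : (x ^ m) ^ 3 = 1 := by linear_combination (x ^ m - 1) * hxm
  rw [mul_involutionPoly hm, hxm, mul_div_cancel₀ _ hx, hcube]
  field_simp
  linear_combination (-s) * hxm

lemma involutionPoly_eq_piecewiseInv (h3 : (3 : F) ≠ 0) {m : ℕ} (hm : 2 ≤ m)
    (hcube : ∀ x : F, x ≠ 0 → (x ^ m) ^ 3 = 1) (s : F) :
    involutionPoly m s = piecewiseInv m s := by
  funext x
  by_cases hx : x = 0
  · simp [piecewiseInv, hx, involutionPoly_zero hm]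
  by_cases hxm : x ^ m = 1
  · simp [piecewiseInv, hxm, involutionPoly_of_pow_eq_one h3 (by omega) s hx hxm]
  have hroot : (x ^ m) ^ 2 + x ^ m + 1 = 0 := by
    have : (x ^ m - 1) * ((x ^ m) ^ 2 + x ^ m + 1) = 0 := by
      linear_combination hcube x hx
    exact (mul_eq_zero.mp this).resolve_left (sub_ne_zero.mpr hxm)
  simp [piecewiseInv, hx, hxm, involutionPoly_of_sq_add_add_one_eq_zero h3 (by omega) s hx hroot]

lemma piecewiseInv_involutive {m : ℕ} {s : F} (hs : s ^ m = 1) :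
    Function.Involutive (piecewiseInv m s) := by
  intro x
  by_cases hfix : x = 0 ∨ x ^ m = 1
  · unfold piecewiseInv
    rw [if_pos hfix, if_pos hfix]
  obtain ⟨hx, hxm⟩ := not_or.mp hfix
  have hm : m ≠ 0 := by rintro rfl; exact hxm (pow_zero x)
  have hs0 : s ≠ 0 := ne_zero_pow hm (by rw [hs]; exact one_ne_zero)
  have hsx : (s / x) ^ m ≠ 1 := by
    rwa [div_pow, hs, one_div, inv_ne_one]
  simp only [piecewiseInv, hx, hxm, hs0, hsx, div_eq_zero_iff, or_self, if_false]
  exact div_div_cancel₀ hs0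

lemma setOf_piecewiseInv_eq_self {m : ℕ} (hm : 0 < m) {s : F} (hs : s ^ m = 1)
    (hcube : ∀ x : F, x ≠ 0 → (x ^ m) ^ 3 = 1) :
    {x : F | piecewiseInv m s x = x} = insert 0 (nthRootsFinset m (1 : F) : Set F) := by
  ext x
  simp only [Set.mem_ofPred_eq, Set.mem_insert_iff, mem_coe, mem_nthRootsFinset hm, piecewiseInv]
  split_ifs with hfix
  · simpa using hfix
  obtain ⟨hx, hxm⟩ := not_or.mp hfix
  simp only [hx, hxm, or_self, iff_false]
  intro hsx
  have hsq : x ^ 2 = s := by rw [sq, ← (div_eq_iff hx).mp hsx]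
  have hsq_m : (x ^ m) ^ 2 = 1 := by rw [← pow_mul, mul_comm, pow_mul, hsq, hs]
  exact hxm (by linear_combination hcube x hx - x ^ m * hsq_m)

lemma FiniteField.card_nthRootsFinset_one_of_dvd [Fintype F] {n : ℕ}
    (hn : n ∣ Fintype.card F - 1) : #(nthRootsFinset n (1 : F)) = n := by
  classical
  rcases Nat.eq_zero_or_pos n with rfl | hpos
  · simp
  have : NeZero n := ⟨hpos.ne'⟩
  obtain ⟨ζ, hζ⟩ := card_rootsOfUnity_eq_iff_exists_isPrimitiveRoot.mp <| by
    rw [rootsOfUnity_eq_ker (M := F), IsCyclic.card_powMonoidHom_ker, Nat.card_eq_fintype_card,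
      Fintype.card_units, Nat.gcd_eq_right hn]
  exact hζ.card_nthRootsFinset

lemma FiniteField.three_ne_zero_of_card_mod_three [Fintype F] (h : Fintype.card F % 3 = 1) :
    (3 : F) ≠ 0 := by
  intro h3
  have hcard := FiniteField.cast_card_eq_zero F
  rw [← Nat.mod_add_div (Fintype.card F) 3, h] at hcard
  push_cast at hcard
  simp [h3] at hcard

end

theorem stmt12_general (q m : ℕ) (F : Type*) [Field F] [Fintype F]
    (hq : Fintype.card F = q) (hodd : Odd q) (hq3 : q % 3 = 1)
    (hm : m = (q - 1) / 3)
    (γ : Fˣ)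
    (k : ℕ)
    (a b c : F)
    (ha : a = 2 * (γ : F)^(3*k) / 3)
    (hb : b = 1 / 3)
    (hc : c = -(γ : F)^(3*k) / 3)
    (g : F → F)
    (hg : ∀ x : F, g x = a * x^(3*m-1) + b * x^(2*m+1) + c * x^(2*m-1) + b * x^(m+1) + c * x^(m-1) + b * x) :
    Function.Bijective g ∧ (∀ x : F, g (g x) = x) ∧
      {x : F | g x = x}.ncard = m + 1 := by
  subst hq
  have hcard_pos : 1 < Fintype.card F := Fintype.one_lt_card
  have hm2 : 2 ≤ m := by obtain ⟨l, hl⟩ := hodd; omega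
  have hcard : Fintype.card F - 1 = 3 * m := by omega
  have hcube (x : F) (hx : x ≠ 0) : (x ^ m) ^ 3 = 1 := by
    rw [← pow_mul, mul_comm, ← hcard, FiniteField.pow_card_sub_one_eq_one x hx]
  have hs : ((γ : F) ^ (3 * k)) ^ m = 1 := by
    rw [← pow_mul, show 3 * k * m = m * 3 * k by ring, pow_mul, pow_mul, hcube _ γ.ne_zero,
      one_pow]
  have hg_eq : g = piecewiseInv m ((γ : F) ^ (3 * k)) := by
    rw [← involutionPoly_eq_piecewiseInv
      (FiniteField.three_ne_zero_of_card_mod_three hq3) hm2 hcube]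
    exact funext fun x => by rw [hg, ha, hb, hc]; rfl
  subst hg_eq
  refine ⟨(piecewiseInv_involutive hs).bijective, piecewiseInv_involutive hs, ?_⟩
  have hzero : (0 : F) ∉ (nthRootsFinset m (1 : F) : Set F) := by
    simp [mem_nthRootsFinset (by omega : 0 < m), zero_pow (by omega : m ≠ 0)]
  rw [setOf_piecewiseInv_eq_self (by omega) hs hcube, Set.ncard_insert_of_notMem hzero,
    Set.ncard_coe_finset,
    FiniteField.card_nthRootsFinset_one_of_dvd ⟨3, by rw [hcard, mul_comm]⟩]

theorem stmt12 (q m : ℕ) (F : Type*) [Field F] [Fintype F]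
    (hq : Fintype.card F = q) (hodd : Odd q) (hq3 : q % 3 = 1)
    (hm : m = (q - 1) / 3)
    (γ : Fˣ) (hγ : ∀ x : Fˣ, x ∈ Subgroup.zpowers γ)
    (k : ℕ) (hk : k ≤ m - 1)
    (a b c : F)
    (ha : a = 2 * (γ : F)^(3*k) / 3)
    (hb : b = 1 / 3)
    (hc : c = -(γ : F)^(3*k) / 3)
    (g : F → F)
    (hg : ∀ x : F, g x = a * x^(3*m-1) + b * x^(2*m+1) + c * x^(2*m-1) + b * x^(m+1) + c * x^(m-1) + b * x) :
    Function.Bijective g ∧ (∀ x : F, g (g x) = x) ∧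
      {x : F | g x = x}.ncard = m + 1 :=
  stmt12_general q m F hq hodd hq3 hm γ k a b c ha hb hc g hg
end

section
/- Let k be an integer with 0 ≤ k ≤ m-1, define a = 2γ^(3k)/3, b = 1/3, c = -γ^(3k)/3 in F_q, and let g(x) = a·x^(3m-1) + b·x^(2m+1) + c·x^(2m-1) + b·x^(m+1) + c·x^(m-1) + b·x. Then for every integer i with 0 ≤ i ≤ m-1 one has g(γ^(3i)) = γ^(3i); that is, g fixes every cube in F_q^*. -/
theorem stmt13 (q m : ℕ) (F : Type*) [Field F] [Fintype F]
    (hq : Fintype.card F = q) (hodd : Odd q) (hq3 : q % 3 = 1)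
    (hm : m = (q - 1) / 3)
    (γ : Fˣ) (hγ : ∀ x : Fˣ, x ∈ Subgroup.zpowers γ)
    (k : ℕ) (hk : k ≤ m - 1)
    (a b c : F)
    (ha : a = 2 * (γ : F)^(3*k) / 3)
    (hb : b = 1 / 3)
    (hc : c = -(γ : F)^(3*k) / 3)
    (g : F → F)
    (hg : ∀ x : F, g x = a * x^(3*m-1) + b * x^(2*m+1) + c * x^(2*m-1) + b * x^(m+1) + c * x^(m-1) + b * x) :
    ∀ i : ℕ, i ≤ m - 1 → g ((γ : F)^(3*i)) = (γ : F)^(3*i) := by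
  intro i hi
  have hq2 : 2 ≤ q := hq ▸ Fintype.one_lt_card
  obtain ⟨t, ht⟩ := hodd
  have hm1 : 1 ≤ m := by omega
  have h3m : 3 * m = q - 1 := by omega
  have hγ0 : (γ : F) ≠ 0 := γ.ne_zero
  -- 3 ≠ 0 in F
  have h3F : (3 : F) ≠ 0 := by
    intro h30
    haveI := ringChar.charP F
    have hp : (ringChar F).Prime := CharP.char_is_prime F (ringChar F)
    have hd3 : ringChar F ∣ 3 := (ringChar.spec F 3).mp (by exact_mod_cast h30)
    have heq3 : ringChar F = 3 := (Nat.prime_dvd_prime_iff_eq hp Nat.prime_three).mp hd3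
    have hdq : ringChar F ∣ q := (ringChar.spec F q).mp (by
      rw [← hq]; exact FiniteField.cast_card_eq_zero F)
    rw [heq3] at hdq
    omega
  have hxm : ((γ : F) ^ (3 * i)) ^ m = 1 := by
    rw [← pow_mul, show 3 * i * m = (q - 1) * i by rw [← h3m]; ring, pow_mul,
      show (γ : F) ^ (q - 1) = 1 by
        rw [← hq]; exact FiniteField.pow_card_sub_one_eq_one _ hγ0, one_pow]
  set x := (γ : F) ^ (3 * i) with hx
  have e1 : x ^ (3 * m - 1) = x ^ (m - 1) := by
    rw [show 3 * m - 1 = (m - 1) + m * 2 by omega, pow_add, pow_mul, hxm, one_pow, mul_one]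
  have e2 : x ^ (2 * m + 1) = x := by
    rw [show 2 * m + 1 = 1 + m * 2 by ring, pow_add, pow_mul, hxm, one_pow, pow_one, mul_one]
  have e3 : x ^ (2 * m - 1) = x ^ (m - 1) := by
    rw [show 2 * m - 1 = (m - 1) + m * 1 by omega, pow_add, pow_mul, hxm, one_pow, mul_one]
  have e4 : x ^ (m + 1) = x := by
    rw [show m + 1 = 1 + m * 1 by ring, pow_add, pow_mul, hxm, one_pow, pow_one, mul_one]
  rw [hg, e1, e2, e3, e4, ha, hb, hc]
  field_simp
  ring
end

section
/- Let k be an integer with 0 ≤ k ≤ m-1, define a = 2γ^(3k)/3, b = 1/3, c = -γ^(3k)/3 in F_q, and let g(x) = a·x^(3m-1) + b·x^(2m+1) + c·x^(2m-1) + b·x^(m+1) + c·x^(m-1) + b·x. Then for every integer i with 0 ≤ i ≤ m-1 one has g(γ^(3i+1)) = γ^(3(k-i)-1), where the exponent 3(k-i)-1 is an integer exponent (possibly negative) and γ raised to it is taken in the group F_q^*. -/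
theorem stmt14 (q m : ℕ) (F : Type*) [Field F] [Fintype F]
    (hq : Fintype.card F = q) (hodd : Odd q) (hq3 : q % 3 = 1)
    (hm : m = (q - 1) / 3)
    (γ : Fˣ) (hγ : ∀ x : Fˣ, x ∈ Subgroup.zpowers γ)
    (k : ℕ) (hk : k ≤ m - 1)
    (a b c : F)
    (ha : a = 2 * (γ : F)^(3*k) / 3)
    (hb : b = 1 / 3)
    (hc : c = -(γ : F)^(3*k) / 3)
    (g : F → F)
    (hg : ∀ x : F, g x = a * x^(3*m-1) + b * x^(2*m+1) + c * x^(2*m-1) + b * x^(m+1) + c * x^(m-1) + b * x) :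
    ∀ i : ℕ, i ≤ m - 1 → g ((γ : F)^(3*i+1)) = ((γ ^ (3 * ((k : ℤ) - (i : ℤ)) - 1) : Fˣ) : F) := by
  intro i hi
  have hq2 : 2 ≤ q := hq ▸ Fintype.one_lt_card
  obtain ⟨j, hj⟩ := hodd
  have hq4 : 4 ≤ q := by omega
  have h3m : 3 * m = q - 1 := by omega
  have hm1 : 1 ≤ m := by omega
  have hord : orderOf γ = 3 * m := by
    classical
    rw [orderOf_eq_card_of_forall_mem_zpowers hγ, Nat.card_eq_fintype_card,
      Fintype.card_units, hq]
    omega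
  have hu1 : γ ^ (3*m) = 1 := hord ▸ pow_orderOf_eq_one γ
  have ht3m : (γ:F)^(3*m) = 1 := by
    have := congrArg (Units.val) hu1
    push_cast at this
    exact this
  set t : F := (γ : F) with htdef
  have hω3 : (t ^ m) ^ 3 = 1 := by rw [← pow_mul, mul_comm, ht3m]
  have hωne : t ^ m ≠ 1 := by
    intro h
    have hu : γ ^ m = 1 := by
      ext
      push_cast
      exact h
    have hdvd : orderOf γ ∣ m := orderOf_dvd_of_pow_eq_one hu
    rw [hord] at hdvd
    have := Nat.le_of_dvd hm1 hdvd
    omega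
  have hω : (t ^ m) ^ 2 + t ^ m + 1 = 0 := by
    have h0 : (t ^ m - 1) * ((t ^ m) ^ 2 + t ^ m + 1) = 0 := by linear_combination hω3
    rcases mul_eq_zero.mp h0 with h | h
    · exact absurd (sub_eq_zero.mp h) hωne
    · exact h
  have h3 : (3:F) ≠ 0 := by
    intro h30
    have hc0 : ((q:ℕ):F) = 0 := by rw [← hq]; exact FiniteField.cast_card_eq_zero F
    have hqe : q = 3 * (q / 3) + 1 := by omega
    rw [hqe] at hc0
    push_cast at hc0
    rw [h30] at hc0
    simp at hc0
  have hx : t ^ (3*i+1) ≠ 0 := pow_ne_zero _ (Units.ne_zero γ)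
  set x : F := t ^ (3*i+1) with hxdef
  have hxm : x ^ m = t ^ m := by
    rw [hxdef, ← pow_mul, show (3*i+1)*m = 3*m*i + m by ring, pow_add, pow_mul, ht3m,
      one_pow, one_mul]
  have hxm2 : x ^ (2*m) = (t ^ m) ^ 2 := by rw [show 2*m = m*2 by ring, pow_mul, hxm]
  have hxm3 : x ^ (3*m) = 1 := by
    rw [show 3*m = m*3 by ring, pow_mul, hxm, hω3]
  have e1 : x ^ (3*m-1) * x = 1 := by
    rw [← pow_succ, show 3*m-1+1 = 3*m by omega, hxm3]
  have e2 : x ^ (2*m+1) = (t ^ m) ^ 2 * x := by rw [pow_succ, hxm2]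
  have e3 : x ^ (2*m-1) * x = (t ^ m) ^ 2 := by
    rw [← pow_succ, show 2*m-1+1 = 2*m by omega, hxm2]
  have e4 : x ^ (m+1) = t ^ m * x := by rw [pow_succ, hxm]
  have e5 : x ^ (m-1) * x = t ^ m := by
    rw [← pow_succ, show m-1+1 = m by omega, hxm]
  have hR : ((γ ^ (3 * ((k : ℤ) - (i : ℤ)) - 1) : Fˣ) : F) * x = t ^ (3*k) := by
    have hu : (γ ^ (3 * ((k : ℤ) - (i : ℤ)) - 1) : Fˣ) * γ ^ (3*i+1) = γ ^ (3*k) := by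
      rw [← zpow_natCast γ (3*i+1), ← zpow_natCast γ (3*k), ← zpow_add]
      congr 1
      push_cast
      ring
    have := congrArg (Units.val) hu
    push_cast at this
    rw [hxdef, htdef]
    exact_mod_cast this
  apply mul_right_cancel₀ hx
  rw [hg, hR]
  have expand : (a * x^(3*m-1) + b * x^(2*m+1) + c * x^(2*m-1) + b * x^(m+1) + c * x^(m-1) + b * x) * x
      = a * (x^(3*m-1) * x) + b * x^(2*m+1) * x + c * (x^(2*m-1) * x)
        + b * x^(m+1) * x + c * (x^(m-1) * x) + b * x * x := by ring
  rw [expand, e1, e2, e3, e4, e5, ha, hb, hc]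
  rw [hxdef]
  field_simp
  linear_combination (t ^ (3*i+1) * t ^ (3*i+1) - t ^ (3*k)) * hω
end

section
/- Let k be an integer with 0 ≤ k ≤ m-1, define a = 2γ^(3k)/3, b = 1/3, c = -γ^(3k)/3 in F_q, and let g(x) = a·x^(3m-1) + b·x^(2m+1) + c·x^(2m-1) + b·x^(m+1) + c·x^(m-1) + b·x. Then for every integer i with 0 ≤ i ≤ m-1 one has g(γ^(3(k-i)-1)) = γ^(3i+1), where the exponent 3(k-i)-1 is an integer exponent (possibly negative) and γ raised to it is taken in the group F_q^*. -/
/-!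
Put `x = γ^(3(k-i)-1)`. Since `γ^m` is a primitive cube root of unity and `3(k-i)-1` is prime
to `3`, so is `ζ = x^m`; hence `x^(3m) = 1` and `ζ² + ζ + 1 = 0`. In `g x` the three `b`-terms
add up to `b x (ζ² + ζ + 1) = 0` and the two `c`-terms to `c x⁻¹ (ζ² + ζ) = -c x⁻¹`, so
`g x = (a - c) / x = γ^(3k) / x = γ^(3i+1)`.
-/

theorem IsPrimitiveRoot.sq_add_self_add_one_eq_zero {R : Type*} [CommRing R] [IsDomain R]
    {ζ : R} (h : IsPrimitiveRoot ζ 3) : ζ ^ 2 + ζ + 1 = 0 := by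
  have h3 := h.geom_sum_eq_zero (by norm_num)
  simp only [Finset.sum_range_succ, Finset.sum_range_zero] at h3
  linear_combination h3

theorem IsPrimitiveRoot.zpow_pow_of_isCoprime {G : Type*} [CommGroup G] {γ : G} {m : ℕ}
    (hγ : IsPrimitiveRoot γ (3 * m)) (hm : 0 < m) {e : ℤ} (he : IsCoprime e 3) :
    IsPrimitiveRoot ((γ ^ e) ^ m) 3 := by
  rw [← zpow_natCast, ← zpow_mul, mul_comm, zpow_mul, zpow_natCast]
  exact (hγ.pow (by positivity) (mul_comm _ _)).zpow_of_gcd_eq_one e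
    (Int.isCoprime_iff_gcd_eq_one.mp he)

theorem add_pow_add_eq_sub_div_of_sq_add_add_one_eq_zero {F : Type*} [Field F] {x : F}
    (hx : x ≠ 0) {m : ℕ} (hm : 0 < m) (hζ : (x ^ m) ^ 2 + x ^ m + 1 = 0) (a b c : F) :
    a * x ^ (3 * m - 1) + b * x ^ (2 * m + 1) + c * x ^ (2 * m - 1) + b * x ^ (m + 1)
      + c * x ^ (m - 1) + b * x = (a - c) / x := by
  obtain ⟨n, rfl⟩ : ∃ n, m = n + 1 := ⟨m - 1, by omega⟩
  have hcube : (x ^ (n + 1)) ^ 3 = 1 := by linear_combination (x ^ (n + 1) - 1) * hζ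
  rw [eq_div_iff hx, show 3 * (n + 1) - 1 = 3 * n + 2 by omega,
    show 2 * (n + 1) - 1 = 2 * n + 1 by omega, Nat.add_sub_cancel]
  linear_combination a * hcube + (b * x ^ 2 + c) * hζ

theorem stmt15_general (q m : ℕ) (F : Type*) [Field F] [Fintype F]
    (hq : Fintype.card F = q) (hq3 : q % 3 = 1)
    (hm : m = (q - 1) / 3)
    (γ : Fˣ) (hγ : ∀ x : Fˣ, x ∈ Subgroup.zpowers γ)
    (k : ℕ)
    (a b c : F)
    (ha : a = 2 * (γ : F)^(3*k) / 3)
    (hc : c = -(γ : F)^(3*k) / 3)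
    (g : F → F)
    (hg : ∀ x : F, g x = a * x^(3*m-1) + b * x^(2*m+1) + c * x^(2*m-1) + b * x^(m+1) + c * x^(m-1) + b * x) :
    ∀ i : ℕ, i ≤ m - 1 → g (((γ ^ (3 * ((k : ℤ) - (i : ℤ)) - 1) : Fˣ) : F)) = (γ : F)^(3*i+1) := by
  intro i _
  classical
  have hq2 : 1 < q := hq ▸ Fintype.one_lt_card
  have hm0 : 0 < m := by omega
  have hγ3m : IsPrimitiveRoot γ (3 * m) := by
    have hcard : Fintype.card Fˣ = 3 * m := by rw [Fintype.card_units, hq]; omega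
    simpa [orderOf_eq_card_of_forall_mem_zpowers hγ, hcard] using IsPrimitiveRoot.orderOf γ
  set e : ℤ := 3 * ((k : ℤ) - (i : ℤ)) - 1 with he
  have hcop : IsCoprime e 3 := ⟨-1, (k : ℤ) - i, by rw [he]; ring⟩
  have hζ : IsPrimitiveRoot (((γ ^ e : Fˣ) : F) ^ m) 3 := by
    simpa using IsPrimitiveRoot.coe_units_iff.mpr (hγ3m.zpow_pow_of_isCoprime hm0 hcop)
  have h3 : (3 : F) ≠ 0 := by exact_mod_cast hζ.neZero'.out
  have hac : a - c = (γ : F) ^ (3 * k) := by rw [ha, hc]; field_simp; ring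
  have hquot : γ ^ (3 * k) / γ ^ e = γ ^ (3 * i + 1) := by
    rw [← zpow_natCast, ← zpow_natCast, div_eq_mul_inv, ← zpow_sub, he]; congr 1; push_cast; ring
  rw [hg, add_pow_add_eq_sub_div_of_sq_add_add_one_eq_zero (γ ^ e).ne_zero hm0
    hζ.sq_add_self_add_one_eq_zero, hac]
  exact_mod_cast congrArg Units.val hquot

theorem stmt15 (q m : ℕ) (F : Type*) [Field F] [Fintype F]
    (hq : Fintype.card F = q) (hodd : Odd q) (hq3 : q % 3 = 1)
    (hm : m = (q - 1) / 3)
    (γ : Fˣ) (hγ : ∀ x : Fˣ, x ∈ Subgroup.zpowers γ)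
    (k : ℕ) (hk : k ≤ m - 1)
    (a b c : F)
    (ha : a = 2 * (γ : F)^(3*k) / 3)
    (hb : b = 1 / 3)
    (hc : c = -(γ : F)^(3*k) / 3)
    (g : F → F)
    (hg : ∀ x : F, g x = a * x^(3*m-1) + b * x^(2*m+1) + c * x^(2*m-1) + b * x^(m+1) + c * x^(m-1) + b * x) :
    ∀ i : ℕ, i ≤ m - 1 → g (((γ ^ (3 * ((k : ℤ) - (i : ℤ)) - 1) : Fˣ) : F)) = (γ : F)^(3*i+1) :=
  stmt15_general q m F hq hq3 hm γ hγ k a b c ha hc g hg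
end

section
/- Let k be an integer with 0 ≤ k ≤ m-1, and define a = 2γ^(3k+2)/3, b = γ^m/3, c = -γ^(m+3k+2)/3, d = γ^(2m)/3, e = -γ^(2m+3k+2)/3, f = 1/3 in F_q. Then the map g : F_q → F_q given by g(x) = a·x^(3m-1) + b·x^(2m+1) + c·x^(2m-1) + d·x^(m+1) + e·x^(m-1) + f·x is a bijection of F_q, satisfies g(g(x)) = x for all x ∈ F_q, and the set {x ∈ F_q : g(x) = x} has exactly m+1 elements. -/
theorem stmt16 (q m : ℕ) (F : Type*) [Field F] [Fintype F]
    (hq : Fintype.card F = q) (hodd : Odd q) (hq3 : q % 3 = 1)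
    (hm : m = (q - 1) / 3)
    (γ : Fˣ) (hγ : ∀ x : Fˣ, x ∈ Subgroup.zpowers γ)
    (k : ℕ) (hk : k ≤ m - 1)
    (a b c d e f : F)
    (ha : a = 2 * (γ : F)^(3*k+2) / 3)
    (hb : b = (γ : F)^m / 3)
    (hc : c = -(γ : F)^(m+3*k+2) / 3)
    (hd : d = (γ : F)^(2*m) / 3)
    (he : e = -(γ : F)^(2*m+3*k+2) / 3)
    (hf : f = 1 / 3)
    (g : F → F)
    (hg : ∀ x : F, g x = a * x^(3*m-1) + b * x^(2*m+1) + c * x^(2*m-1) + d * x^(m+1) + e * x^(m-1) + f * x) :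
    Function.Bijective g ∧ (∀ x : F, g (g x) = x) ∧
      {x : F | g x = x}.ncard = m + 1 := by
  classical
  have hq2 : 1 < q := hq ▸ Fintype.one_lt_card
  have hodd' : q % 2 = 1 := Nat.odd_iff.mp hodd
  have hq7 : 7 ≤ q := by omega
  have hm3 : 3 * m = q - 1 := by omega
  have hm2 : 2 ≤ m := by omega
  have hcardU : Nat.card Fˣ = q - 1 := by
    rw [Nat.card_eq_fintype_card, Fintype.card_units, hq]
  have hord : orderOf γ = 3 * m := by
    rw [orderOf_eq_card_of_forall_mem_zpowers hγ, hcardU, hm3]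
  set ω : F := (γ : F)^m with hωdef
  set A : F := (γ : F)^(3*k+2) with hAdef
  have hγne : (γ : F) ≠ 0 := Units.ne_zero γ
  have hAne : A ≠ 0 := pow_ne_zero _ hγne
  have hωne0 : ω ≠ 0 := pow_ne_zero _ hγne
  have hγ3m : (γ : F)^(3*m) = 1 := by
    rw [← Units.val_pow_eq_pow_val, ← hord, pow_orderOf_eq_one, Units.val_one]
  have hω3 : ω^3 = 1 := by
    rw [hωdef, ← pow_mul, mul_comm m 3, hγ3m]
  have hωne1 : ω ≠ 1 := by
    intro h
    have : (γ : Fˣ)^m = 1 := Units.ext (by simpa using h)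
    have := orderOf_dvd_of_pow_eq_one this
    rw [hord] at this
    have := Nat.le_of_dvd (by omega) this
    omega
  have hωsum : ω^2 + ω + 1 = 0 := by
    have h := hω3
    have hh : (ω - 1) * (ω^2 + ω + 1) = 0 := by linear_combination h
    rcases mul_eq_zero.mp hh with h' | h'
    · exact absurd (sub_eq_zero.mp h') hωne1
    · exact h'
  have h3 : (3 : F) ≠ 0 := by
    intro h3
    have hcast : ((3 * m : ℕ) : F) = (q : F) - 1 := by
      rw [hm3, Nat.cast_sub (by omega), Nat.cast_one]
    have hqz : ((q : ℕ) : F) = 0 := by rw [← hq]; exact FiniteField.cast_card_eq_zero F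
    rw [hqz, Nat.cast_mul] at hcast
    simp only [Nat.cast_ofNat, h3, zero_mul] at hcast
    exact one_ne_zero (by linear_combination hcast)
  have h33 : (3 : F)⁻¹ * 3 = 1 := inv_mul_cancel₀ h3
  have hAm : A^m = ω^2 := by
    rw [hAdef, ← pow_mul, hωdef, ← pow_mul]
    rw [show (3*k+2)*m = (3*m)*k + m*2 by ring, pow_add, pow_mul, hγ3m, one_pow, one_mul]
  have hω2ne : ω^2 ≠ ω := by
    intro h
    exact hωne1 (mul_right_cancel₀ hωne0 (by linear_combination h : ω * ω = 1 * ω))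
  -- key form of g
  have key : ∀ x : F, g x = if x^m = ω then x else A * x⁻¹ := by
    intro x
    by_cases hx : x = 0
    · subst hx
      rw [if_neg (by simp [zero_pow (by omega : m ≠ 0)]; exact fun h => hωne0 h.symm)]
      rw [hg]
      simp [zero_pow, hm2, show 3*m-1 ≠ 0 by omega, show 2*m-1 ≠ 0 by omega,
        show m-1 ≠ 0 by omega]
    · have hx3m : x^(3*m) = 1 := by
        rw [hm3, ← hq]; exact FiniteField.pow_card_sub_one_eq_one x hx
      set t : F := x^m with htdef
      have ht3 : t^3 = 1 := by rw [htdef, ← pow_mul, mul_comm m 3, hx3m]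
      have e1 : x^(3*m-1) = x⁻¹ := by
        rw [pow_sub₀ x hx (by omega : 1 ≤ 3*m), hx3m, pow_one, one_mul]
      have e2 : x^(2*m+1) = t^2 * x := by
        rw [pow_add, pow_one, htdef, ← pow_mul, mul_comm m 2]
      have e3 : x^(2*m-1) = t^2 * x⁻¹ := by
        rw [pow_sub₀ x hx (by omega : 1 ≤ 2*m), pow_one, htdef, ← pow_mul, mul_comm m 2]
      have e4 : x^(m+1) = t * x := by rw [pow_add, pow_one]
      have e5 : x^(m-1) = t * x⁻¹ := by
        rw [pow_sub₀ x hx (by omega : 1 ≤ m), pow_one]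
      have hc' : (γ : F)^(m+3*k+2) = ω * A := by
        rw [show m+3*k+2 = m + (3*k+2) by ring, pow_add]
      have he' : (γ : F)^(2*m+3*k+2) = ω^2 * A := by
        rw [show 2*m+3*k+2 = m*2 + (3*k+2) by ring, pow_add, pow_mul]
      have hd' : (γ : F)^(2*m) = ω^2 := by rw [show 2*m = m*2 by ring, pow_mul]
      have hcube : (t - 1) * ((t - ω) * (t - ω^2)) = 0 := by
        linear_combination ht3 + (t - t^2) * hωsum + (t - 1) * hω3
      rw [hg, ha, hb, hc, hd, he, hf, e1, e2, e3, e4, e5, hc', he', hd']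
      rcases mul_eq_zero.mp hcube with h1 | h1
      · have ht1 : t = 1 := sub_eq_zero.mp h1
        rw [if_neg (by rw [ht1]; exact fun h => hωne1 h.symm), ht1]
        linear_combination (x/3 - A*x⁻¹/3) * hωsum + (A*x⁻¹) * h33
      · rcases mul_eq_zero.mp h1 with h2 | h2
        · have ht1 : t = ω := sub_eq_zero.mp h2
          rw [ht1, if_pos rfl]
          linear_combination (2*x/3 - 2*A*x⁻¹/3) * hω3 + x * h33
        · have ht1 : t = ω^2 := sub_eq_zero.mp h2
          rw [if_neg (by rw [ht1]; exact hω2ne), ht1]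
          linear_combination (x/3 - A*x⁻¹/3) * ((ω^2+ω) * hω3 + hωsum) + (A*x⁻¹) * h33
  -- involution
  have hinv : ∀ x : F, g (g x) = x := by
    intro x
    by_cases h1 : x^m = ω
    · rw [key x, if_pos h1, key x, if_pos h1]
    · rw [key x, if_neg h1]
      by_cases hx : x = 0
      · subst hx
        simp only [inv_zero, mul_zero]
        rw [key 0, if_neg (by simp [zero_pow (by omega : m ≠ 0)]; exact fun h => hωne0 h.symm)]
        simp
      · have hx3m : x^(3*m) = 1 := by
          rw [hm3, ← hq]; exact FiniteField.pow_card_sub_one_eq_one x hx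
        have ht3 : (x^m)^3 = 1 := by rw [← pow_mul, mul_comm m 3, hx3m]
        have hAx : (A * x⁻¹)^m = ω^2 * (x^m)⁻¹ := by
          rw [mul_pow, hAm, inv_pow]
        have hcond : ¬ (A * x⁻¹)^m = ω := by
          rw [hAx]
          have hcube : (x^m - 1) * ((x^m - ω) * (x^m - ω^2)) = 0 := by
            linear_combination ht3 + (x^m - (x^m)^2) * hωsum + (x^m - 1) * hω3
          rcases mul_eq_zero.mp hcube with hh | hh
          · rw [sub_eq_zero.mp hh]
            simpa using hω2ne
          · rcases mul_eq_zero.mp hh with hh2 | hh2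
            · exact absurd (sub_eq_zero.mp hh2) h1
            · rw [sub_eq_zero.mp hh2]
              rw [mul_inv_eq_iff_eq_mul₀ (pow_ne_zero _ hωne0)]
              intro hcon
              have h1ω : (1:F) * ω^2 = ω * ω^2 := by linear_combination hcon
              exact hωne1 (mul_right_cancel₀ (pow_ne_zero 2 hωne0) h1ω).symm
        rw [key (A * x⁻¹), if_neg hcond, mul_inv, inv_inv, ← mul_assoc, mul_inv_cancel₀ hAne, one_mul]
  -- fixed point set
  have hcoe : ∀ (n : ℕ) (u : Fˣ), ((γ ^ n : Fˣ) : F) = (γ : F)^n := fun n u => Units.val_pow_eq_pow_val γ n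
  have hfix : {x : F | g x = x} = ↑(insert (0:F) ((Finset.range m).image (fun i => (γ:F)^(3*i+1)))) := by
    ext x
    simp only [Set.mem_setOf_eq, Finset.coe_insert, Set.mem_insert_iff, Finset.coe_image,
      Finset.coe_range, Set.mem_image, Set.mem_Iio]
    constructor
    · intro hgx
      rw [key] at hgx
      by_cases hx : x = 0
      · exact Or.inl hx
      · right
        -- show x^m = ω
        have hxm : x^m = ω := by
          by_cases h1 : x^m = ω
          · exact h1
          · exfalso
            rw [if_neg h1] at hgx
            -- A * x⁻¹ = x, so x^2 = A
            have hx2 : x^2 = A := by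
              field_simp at hgx
              linear_combination -hgx
            have hx3m : x^(3*m) = 1 := by
              rw [hm3, ← hq]; exact FiniteField.pow_card_sub_one_eq_one x hx
            have h2m : x^(2*m) = ω^2 := by
              rw [pow_mul, hx2, hAm]
            apply h1
            have : x^m * ω^2 = 1 := by
              rw [← h2m, ← pow_add, show m + 2*m = 3*m by ring, hx3m]
            have hω2 : ω * ω^2 = 1 := by linear_combination hω3
            exact mul_right_cancel₀ (pow_ne_zero _ hωne0) (this.trans hω2.symm)
        -- x is a power of γ
        obtain ⟨u, hu⟩ : ∃ u : Fˣ, (u : F) = x := ⟨Units.mk0 x hx, rfl⟩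
        obtain ⟨n, hn⟩ := (Submonoid.mem_powers_iff u γ).mp
          (mem_powers_iff_mem_zpowers.mpr (hγ u))
        have hn' : γ ^ (n % orderOf γ) = γ ^ n := pow_mod_orderOf γ n
        set n' := n % orderOf γ with hn'def
        have hn'lt : n' < 3*m := by
          rw [hn'def, ← hord]
          exact Nat.mod_lt _ (by rw [hord]; omega)
        have hxn : x = (γ : F)^n' := by
          rw [← hu, ← hn, ← hn', hcoe n' u]
        -- x^m = ω gives γ^(n'*m) = γ^m
        have hmod : n' * m ≡ m [MOD orderOf γ] := by
          apply pow_eq_pow_iff_modEq.mp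
          apply Units.ext
          rw [hcoe _ u, hcoe _ u, pow_mul]
          rw [← hxn, hxm, hωdef]
        rw [hord] at hmod
        have h' : (n' * m) % (3 * m) = m % (3*m) := hmod
        have emm : n' * m % (3 * m) = n' % 3 * m := Nat.mul_mod_mul_right m n' 3
        have emm2 : m % (3*m) = m := Nat.mod_eq_of_lt (by omega)
        have hn3 : n' % 3 = 1 := by
          have h'' : n' % 3 * m = 1 * m := by rw [← emm, h', emm2, one_mul]
          exact Nat.eq_of_mul_eq_mul_right (by omega) h''
        refine ⟨n' / 3, by omega, ?_⟩
        rw [hxn]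
        congr 1
        omega
    · intro hx
      rcases hx with h0 | ⟨i, hi, hix⟩
      · rw [h0, key]
        rw [if_neg (by simp [zero_pow (by omega : m ≠ 0)]; exact fun h => hωne0 h.symm)]
        simp
      · rw [key, if_pos]
        rw [← hix, ← pow_mul]
        have hmq : (3*i+1)*m ≡ m [MOD 3*m] := by
          show (3*i+1)*m % (3*m) = m % (3*m)
          have emm : (3*i+1) * m % (3 * m) = (3*i+1) % 3 * m := Nat.mul_mod_mul_right m _ 3
          have emm2 : m % (3*m) = m := Nat.mod_eq_of_lt (by omega)
          rw [emm, emm2, show (3*i+1) % 3 = 1 by omega, one_mul]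
        have : γ ^ ((3*i+1)*m) = γ ^ m := by
          apply pow_eq_pow_iff_modEq.mpr
          rw [hord]; exact hmq
        calc (γ:F) ^ ((3*i+1)*m) = ((γ ^ ((3*i+1)*m) : Fˣ) : F) := (hcoe _ γ).symm
          _ = ((γ ^ m : Fˣ) : F) := by rw [this]
          _ = ω := hcoe _ γ
  -- counting
  have hnotmem : (0:F) ∉ (Finset.range m).image (fun i => (γ:F)^(3*i+1)) := by
    intro hmem
    obtain ⟨i, -, h⟩ := Finset.mem_image.mp hmem
    exact pow_ne_zero _ hγne h
  have hinj : Set.InjOn (fun i => (γ:F)^(3*i+1)) ↑(Finset.range m) := by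
    intro i hi j hj hij
    simp only [Finset.coe_range, Set.mem_Iio] at hi hj
    have : γ ^ (3*i+1) = γ ^ (3*j+1) := Units.ext (by rw [hcoe _ γ, hcoe _ γ]; exact hij)
    have hmod := pow_eq_pow_iff_modEq.mp this
    rw [hord] at hmod
    have hi' : 3*i+1 < 3*m := by omega
    have hj' : 3*j+1 < 3*m := by omega
    have := Nat.ModEq.eq_of_lt_of_lt hmod hi' hj'
    omega
  have hcard : (insert (0:F) ((Finset.range m).image (fun i => (γ:F)^(3*i+1)))).card = m + 1 := by
    rw [Finset.card_insert_of_notMem hnotmem, Finset.card_image_of_injOn hinj,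
      Finset.card_range]
  refine ⟨Function.Involutive.bijective hinv, hinv, ?_⟩
  rw [hfix, Set.ncard_coe_finset, hcard]
end

section
/- Let k be an integer with 0 ≤ k ≤ m-1, define a = 2γ^(3k+2)/3, b = γ^m/3, c = -γ^(m+3k+2)/3, d = γ^(2m)/3, e = -γ^(2m+3k+2)/3, f = 1/3 in F_q, and let g(x) = a·x^(3m-1) + b·x^(2m+1) + c·x^(2m-1) + d·x^(m+1) + e·x^(m-1) + f·x. Then for every integer i with 0 ≤ i ≤ m-1 one has g(γ^(3i+1)) = γ^(3i+1), g(γ^(3i)) = γ^(3(k-i)+2), and g(γ^(3(k-i)+2)) = γ^(3i), where exponents of the form 3(k-i)+2 are integer exponents (possibly negative) and γ raised to them is taken in the group F_q^*. -/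
theorem stmt17 (q m : ℕ) (F : Type*) [Field F] [Fintype F]
    (hq : Fintype.card F = q) (hodd : Odd q) (hq3 : q % 3 = 1)
    (hm : m = (q - 1) / 3)
    (γ : Fˣ) (hγ : ∀ x : Fˣ, x ∈ Subgroup.zpowers γ)
    (k : ℕ) (hk : k ≤ m - 1)
    (a b c d e f : F)
    (ha : a = 2 * (γ : F)^(3*k+2) / 3)
    (hb : b = (γ : F)^m / 3)
    (hc : c = -(γ : F)^(m+3*k+2) / 3)
    (hd : d = (γ : F)^(2*m) / 3)
    (he : e = -(γ : F)^(2*m+3*k+2) / 3)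
    (hf : f = 1 / 3)
    (g : F → F)
    (hg : ∀ x : F, g x = a * x^(3*m-1) + b * x^(2*m+1) + c * x^(2*m-1) + d * x^(m+1) + e * x^(m-1) + f * x) :
    ∀ i : ℕ, i ≤ m - 1 → g ((γ : F)^(3*i+1)) = (γ : F)^(3*i+1) ∧ g ((γ : F)^(3*i)) = ((γ ^ (3 * ((k : ℤ) - (i : ℤ)) + 2) : Fˣ) : F) ∧ g (((γ ^ (3 * ((k : ℤ) - (i : ℤ)) + 2) : Fˣ) : F)) = (γ : F)^(3*i) := by
  classical
  obtain ⟨r, hr⟩ := hodd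
  have hq2 : 1 < q := by rw [← hq]; exact Fintype.one_lt_card_iff_nontrivial.mpr inferInstance
  have hm1 : 1 ≤ m := by omega
  have hq1 : q - 1 = 3 * m := by omega
  have horder : orderOf γ = 3 * m := by
    rw [← hq1, ← hq, ← Fintype.card_units, ← Nat.card_eq_fintype_card]
    exact orderOf_eq_card_of_forall_mem_zpowers hγ
  have hord : γ ^ (3 * m) = 1 := horder ▸ pow_orderOf_eq_one γ
  have hζ : (γ : F) ≠ 0 := Units.ne_zero γ
  have hz3m : (γ : F) ^ (3 * (m : ℤ)) = 1 := by
    rw [show (3 * (m : ℤ)) = ((3 * m : ℕ) : ℤ) by push_cast; ring, zpow_natCast,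
      ← Units.val_pow_eq_pow_val, hord, Units.val_one]
  have key : ∀ (s t : ℤ) (n : ℕ), (∃ c : ℤ, s * n = t + 3 * m * c) →
      ((γ : F) ^ s) ^ n = (γ : F) ^ t := by
    rintro s t n ⟨c, hcc⟩
    rw [← zpow_natCast ((γ : F) ^ s), ← zpow_mul, hcc, zpow_add₀ hζ, zpow_mul, hz3m,
      one_zpow, mul_one]
  have collapse : ∀ (x y t : ℤ), (∃ c : ℤ, x + y = t + 3 * m * c) →
      (γ : F) ^ x * (γ : F) ^ y = (γ : F) ^ t := by
    rintro x y t ⟨c, hcc⟩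
    rw [← zpow_add₀ hζ, hcc, zpow_add₀ hζ, zpow_mul, hz3m, one_zpow, mul_one]
  have muls : ∀ (x y r₁ r₂ : ℤ), (∃ c : ℤ, x + y = r₁ + r₂ + 3 * m * c) →
      (γ : F) ^ x * (γ : F) ^ y = (γ : F) ^ r₁ * (γ : F) ^ r₂ := by
    rintro x y r₁ r₂ ⟨c, hcc⟩
    rw [← zpow_add₀ hζ, hcc, zpow_add₀ hζ, zpow_add₀ hζ, zpow_mul, hz3m, one_zpow, mul_one]
  have nat2int : ∀ n : ℕ, (γ : F) ^ n = (γ : F) ^ (n : ℤ) := fun n => (zpow_natCast _ n).symm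
  have hWne : (γ : F) ^ ((m : ℤ)) ≠ 1 := by
    intro h
    rw [zpow_natCast, ← Units.val_pow_eq_pow_val, ← Units.val_one] at h
    have h1 : γ ^ m = 1 := Units.ext h
    have := Nat.le_of_dvd (by omega) (horder ▸ orderOf_dvd_of_pow_eq_one h1)
    omega
  have hW3 : ((γ : F) ^ ((m : ℤ))) ^ 3 = 1 := by
    rw [key (m : ℤ) 0 3 ⟨1, by push_cast; ring⟩, zpow_zero]
  have hsum : ((γ : F) ^ ((m : ℤ))) ^ 2 + (γ : F) ^ ((m : ℤ)) + 1 = 0 := by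
    set W := (γ : F) ^ ((m : ℤ)) with hW
    have h0 : (W - 1) * (W ^ 2 + W + 1) = 0 := by linear_combination hW3
    rcases mul_eq_zero.mp h0 with h | h
    · exact absurd (by linear_combination h) hWne
    · exact h
  have h3 : (3 : F) ≠ 0 := by
    intro h
    set W := (γ : F) ^ ((m : ℤ)) with hW
    have h0 : (W - 1) ^ 2 = 0 := by linear_combination hsum - W * h
    exact hWne (by linear_combination sq_eq_zero_iff.mp h0)
  have c1 : ((3 * m - 1 : ℕ) : ℤ) = 3 * (m : ℤ) - 1 := by omega
  have c2 : ((2 * m - 1 : ℕ) : ℤ) = 2 * (m : ℤ) - 1 := by omega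
  have c3 : ((m - 1 : ℕ) : ℤ) = (m : ℤ) - 1 := by omega
  have hinv : (3 : F)⁻¹ * 3 = 1 := inv_mul_cancel₀ h3
  intro i hi
  refine ⟨?_, ?_, ?_⟩
  · -- g(γ^(3i+1)) = γ^(3i+1)
    simp only [hg, ha, hb, hc, hd, he, hf, nat2int]
    push_cast
    rw [key (3 * (i : ℤ) + 1) (-(3 * (i : ℤ) + 1)) (3 * m - 1) ⟨3 * (i : ℤ) + 1, by rw [c1]; ring⟩,
        key (3 * (i : ℤ) + 1) (2 * (m : ℤ) + (3 * (i : ℤ) + 1)) (2 * m + 1) ⟨2 * (i : ℤ), by push_cast; ring⟩,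
        key (3 * (i : ℤ) + 1) (2 * (m : ℤ) - (3 * (i : ℤ) + 1)) (2 * m - 1) ⟨2 * (i : ℤ), by rw [c2]; ring⟩,
        key (3 * (i : ℤ) + 1) ((m : ℤ) + (3 * (i : ℤ) + 1)) (m + 1) ⟨(i : ℤ), by push_cast; ring⟩,
        key (3 * (i : ℤ) + 1) ((m : ℤ) - (3 * (i : ℤ) + 1)) (m - 1) ⟨(i : ℤ), by rw [c3]; ring⟩]
    have h1 : (γ : F) ^ ((3 * (k : ℤ) + 2)) * (γ : F) ^ ((-(3 * (i : ℤ) + 1)))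
        = (γ : F) ^ ((3 * (k : ℤ) + 2 - (3 * (i : ℤ) + 1))) := collapse _ _ _ ⟨0, by ring⟩
    have h2 : (γ : F) ^ (((m : ℤ))) * (γ : F) ^ ((2 * (m : ℤ) + (3 * (i : ℤ) + 1)))
        = (γ : F) ^ (((3 * (i : ℤ) + 1))) := collapse _ _ _ ⟨1, by ring⟩
    have h3' : (γ : F) ^ (((m : ℤ) + 3 * (k : ℤ) + 2)) * (γ : F) ^ ((2 * (m : ℤ) - (3 * (i : ℤ) + 1)))
        = (γ : F) ^ ((3 * (k : ℤ) + 2 - (3 * (i : ℤ) + 1))) := collapse _ _ _ ⟨1, by ring⟩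
    have h4 : (γ : F) ^ ((2 * (m : ℤ))) * (γ : F) ^ (((m : ℤ) + (3 * (i : ℤ) + 1)))
        = (γ : F) ^ (((3 * (i : ℤ) + 1))) := collapse _ _ _ ⟨1, by ring⟩
    have h5 : (γ : F) ^ ((2 * (m : ℤ) + 3 * (k : ℤ) + 2)) * (γ : F) ^ (((m : ℤ) - (3 * (i : ℤ) + 1)))
        = (γ : F) ^ ((3 * (k : ℤ) + 2 - (3 * (i : ℤ) + 1))) := collapse _ _ _ ⟨1, by ring⟩
    linear_combination (2 * h1 + h2 - h3' + h4 - h5) / 3 + ((γ : F) ^ (3 * (i : ℤ) + 1)) * hinv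
  · -- g(γ^(3i)) = γ^(3(k-i)+2)
    simp only [hg, ha, hb, hc, hd, he, hf, nat2int]
    push_cast
    rw [key (3 * (i : ℤ)) (-(3 * (i : ℤ))) (3 * m - 1) ⟨3 * (i : ℤ), by rw [c1]; ring⟩,
        key (3 * (i : ℤ)) (3 * (i : ℤ)) (2 * m + 1) ⟨2 * (i : ℤ), by push_cast; ring⟩,
        key (3 * (i : ℤ)) (-(3 * (i : ℤ))) (2 * m - 1) ⟨2 * (i : ℤ), by rw [c2]; ring⟩,
        key (3 * (i : ℤ)) (3 * (i : ℤ)) (m + 1) ⟨(i : ℤ), by push_cast; ring⟩,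
        key (3 * (i : ℤ)) (-(3 * (i : ℤ))) (m - 1) ⟨(i : ℤ), by rw [c3]; ring⟩]
    set W := (γ : F) ^ (m : ℤ) with hW
    set W2 := (γ : F) ^ ((2 * (m : ℤ))) with hW2def
    set U := (γ : F) ^ ((3 * (i : ℤ))) with hU
    set S := (γ : F) ^ ((3 * ((k : ℤ) - (i : ℤ)) + 2)) with hS
    have h1 : (γ : F) ^ ((3 * (k : ℤ) + 2)) * (γ : F) ^ ((-(3 * (i : ℤ)))) = S :=
      collapse _ _ _ ⟨0, by ring⟩
    have h2 : (γ : F) ^ (((m : ℤ) + 3 * (k : ℤ) + 2)) * (γ : F) ^ ((-(3 * (i : ℤ))))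
        = W * S := muls _ _ _ _ ⟨0, by ring⟩
    have h3' : (γ : F) ^ ((2 * (m : ℤ) + 3 * (k : ℤ) + 2)) * (γ : F) ^ ((-(3 * (i : ℤ))))
        = W2 * S := muls _ _ _ _ ⟨0, by ring⟩
    have h4 : W2 = W * W := by
      rw [hW2def, hW, show 2 * (m : ℤ) = (m : ℤ) + (m : ℤ) by ring, zpow_add₀ hζ]
    linear_combination (2 * h1 - h2 - h3') / 3 + ((U - S) / 3) * h4 + ((U - S) / 3) * hsum + S * hinv
  · -- g(γ^(3(k-i)+2)) = γ^(3i)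
    simp only [hg, ha, hb, hc, hd, he, hf, nat2int]
    push_cast
    rw [key (3 * ((k : ℤ) - (i : ℤ)) + 2) (-(3 * ((k : ℤ) - (i : ℤ)) + 2)) (3 * m - 1)
          ⟨3 * ((k : ℤ) - (i : ℤ)) + 2, by rw [c1]; ring⟩,
        key (3 * ((k : ℤ) - (i : ℤ)) + 2) ((m : ℤ) + (3 * ((k : ℤ) - (i : ℤ)) + 2)) (2 * m + 1)
          ⟨2 * ((k : ℤ) - (i : ℤ)) + 1, by push_cast; ring⟩,
        key (3 * ((k : ℤ) - (i : ℤ)) + 2) ((m : ℤ) - (3 * ((k : ℤ) - (i : ℤ)) + 2)) (2 * m - 1)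
          ⟨2 * ((k : ℤ) - (i : ℤ)) + 1, by rw [c2]; ring⟩,
        key (3 * ((k : ℤ) - (i : ℤ)) + 2) (2 * (m : ℤ) + (3 * ((k : ℤ) - (i : ℤ)) + 2)) (m + 1)
          ⟨(k : ℤ) - (i : ℤ), by push_cast; ring⟩,
        key (3 * ((k : ℤ) - (i : ℤ)) + 2) (2 * (m : ℤ) - (3 * ((k : ℤ) - (i : ℤ)) + 2)) (m - 1)
          ⟨(k : ℤ) - (i : ℤ), by rw [c3]; ring⟩]
    set W := (γ : F) ^ (m : ℤ) with hW
    set W2 := (γ : F) ^ ((2 * (m : ℤ))) with hW2def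
    set U := (γ : F) ^ ((3 * (i : ℤ))) with hU
    set S := (γ : F) ^ ((3 * ((k : ℤ) - (i : ℤ)) + 2)) with hS
    have h1 : (γ : F) ^ ((3 * (k : ℤ) + 2)) * (γ : F) ^ ((-(3 * ((k : ℤ) - (i : ℤ)) + 2)))
        = U := collapse _ _ _ ⟨0, by ring⟩
    have h2 : (γ : F) ^ (((m : ℤ) + 3 * (k : ℤ) + 2)) * (γ : F) ^ (((m : ℤ) - (3 * ((k : ℤ) - (i : ℤ)) + 2)))
        = W2 * U := muls _ _ _ _ ⟨0, by ring⟩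
    have h3' : (γ : F) ^ ((2 * (m : ℤ) + 3 * (k : ℤ) + 2)) * (γ : F) ^ ((2 * (m : ℤ) - (3 * ((k : ℤ) - (i : ℤ)) + 2)))
        = W * U := muls _ _ _ _ ⟨1, by ring⟩
    have h4 : W * (γ : F) ^ (((m : ℤ) + (3 * ((k : ℤ) - (i : ℤ)) + 2))) = W2 * S :=
      muls _ _ _ _ ⟨0, by ring⟩
    have h5 : W2 * (γ : F) ^ ((2 * (m : ℤ) + (3 * ((k : ℤ) - (i : ℤ)) + 2))) = W * S :=
      muls _ _ _ _ ⟨1, by ring⟩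
    have h6 : W2 = W * W := by
      rw [hW2def, hW, show 2 * (m : ℤ) = (m : ℤ) + (m : ℤ) by ring, zpow_add₀ hζ]
    linear_combination (2 * h1 + h4 - h2 + h5 - h3') / 3 + ((S - U) / 3) * h6 + ((S - U) / 3) * hsum + U * hinv
end

section
/- Let k be an integer with 0 ≤ k ≤ m-1, define a = 2γ^(3k+1)/3, b = γ^(2m)/3, c = -γ^(2m+3k+1)/3, d = γ^m/3, e = -γ^(m+3k+1)/3, f = 1/3 in F_q, and let g(x) = a·x^(3m-1) + b·x^(2m+1) + c·x^(2m-1) + d·x^(m+1) + e·x^(m-1) + f·x. Then for every integer i with 0 ≤ i ≤ m-1 one has g(γ^(3i+2)) = γ^(3i+2), g(γ^(3i)) = γ^(3(k-i)+1), and g(γ^(3(k-i)+1)) = γ^(3i), where exponents of the form 3(k-i)+1 are integer exponents (possibly negative) and γ raised to them is taken in the group F_q^*. -/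
theorem stmt19 (q m : ℕ) (F : Type*) [Field F] [Fintype F]
    (hq : Fintype.card F = q) (hodd : Odd q) (hq3 : q % 3 = 1)
    (hm : m = (q - 1) / 3)
    (γ : Fˣ) (hγ : ∀ x : Fˣ, x ∈ Subgroup.zpowers γ)
    (k : ℕ) (hk : k ≤ m - 1)
    (a b c d e f : F)
    (ha : a = 2 * (γ : F)^(3*k+1) / 3)
    (hb : b = (γ : F)^(2*m) / 3)
    (hc : c = -(γ : F)^(2*m+3*k+1) / 3)
    (hd : d = (γ : F)^m / 3)
    (he : e = -(γ : F)^(m+3*k+1) / 3)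
    (hf : f = 1 / 3)
    (g : F → F)
    (hg : ∀ x : F, g x = a * x^(3*m-1) + b * x^(2*m+1) + c * x^(2*m-1) + d * x^(m+1) + e * x^(m-1) + f * x) :
    ∀ i : ℕ, i ≤ m - 1 → g ((γ : F)^(3*i+2)) = (γ : F)^(3*i+2) ∧ g ((γ : F)^(3*i)) = ((γ ^ (3 * ((k : ℤ) - (i : ℤ)) + 1) : Fˣ) : F) ∧ g (((γ ^ (3 * ((k : ℤ) - (i : ℤ)) + 1) : Fˣ) : F)) = (γ : F)^(3*i) := by
  classical
  have hq2 : 2 ≤ q := by rw [← hq]; exact Fintype.one_lt_card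
  have hoddq : q % 2 = 1 := Nat.odd_iff.mp hodd
  have hm2 : 2 ≤ m := by omega
  have h3m : 3 * m = q - 1 := by omega
  set u : F := (γ : F) with hu_def
  have hu : u ≠ 0 := Units.ne_zero γ
  have hcardU : Fintype.card Fˣ = q - 1 := by rw [Fintype.card_units, hq]
  have hγ1 : γ ^ (3 * m) = 1 := by rw [h3m, ← hcardU]; exact pow_card_eq_one
  have h1F : u ^ (3 * m) = 1 := by
    have := congrArg (Units.val) hγ1
    push_cast at this
    exact this
  have hW3 : (u ^ m) ^ 3 = 1 := by rw [← pow_mul, mul_comm]; exact h1F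
  have hWne : u ^ m ≠ 1 := by
    intro h
    have hu1 : γ ^ m = 1 := by
      apply Units.ext
      push_cast
      exact h
    have horder : orderOf γ = q - 1 := by
      rw [orderOf_eq_card_of_forall_mem_zpowers hγ, Nat.card_eq_fintype_card, hcardU]
    have hdvd : (q - 1) ∣ m := horder ▸ orderOf_dvd_of_pow_eq_one hu1
    have := Nat.le_of_dvd (by omega) hdvd
    omega
  have h3 : (3 : F) ≠ 0 := by
    intro h30
    have hcube : (u ^ m - 1) ^ 3 = 0 := by
      linear_combination hW3 + (u ^ m - (u ^ m) ^ 2) * h30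
    exact hWne (sub_eq_zero.mp (pow_eq_zero_iff (n := 3) (by norm_num) |>.mp hcube))
  have hsum : 1 + u ^ m + u ^ m * u ^ m = 0 := by
    have hfac : (u ^ m - 1) * (1 + u ^ m + u ^ m * u ^ m) = 0 := by
      linear_combination hW3
    rcases mul_eq_zero.mp hfac with h | h
    · exact absurd (sub_eq_zero.mp h) hWne
    · exact h
  -- primed coefficient equations
  have ha' : (3 : F) * a = 2 * u ^ (3 * k + 1) := by
    rw [ha, mul_comm, div_mul_cancel₀ _ h3]
  have hb' : (3 : F) * b = u ^ m * u ^ m := by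
    rw [hb, mul_comm, div_mul_cancel₀ _ h3, ← pow_add]; ring_nf
  have hc' : (3 : F) * c = -(u ^ m * u ^ m * u ^ (3 * k + 1)) := by
    rw [hc, mul_comm, div_mul_cancel₀ _ h3, ← pow_add, ← pow_add]; ring_nf
  have hd' : (3 : F) * d = u ^ m := by
    rw [hd, mul_comm, div_mul_cancel₀ _ h3]
  have he' : (3 : F) * e = -(u ^ m * u ^ (3 * k + 1)) := by
    rw [he, mul_comm, div_mul_cancel₀ _ h3, ← pow_add]; ring_nf
  have hf' : (3 : F) * f = 1 := by
    rw [hf, mul_comm, div_mul_cancel₀ _ h3]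
  -- decomposition of g
  have hD : ∀ x : F, x ≠ 0 → x ^ (3 * m) = 1 →
      g x = (a + f * x ^ 2 + x ^ m * (e + d * x ^ 2) + x ^ m * x ^ m * (c + b * x ^ 2)) / x := by
    intro x hx hx1
    have f1 : x ^ (3 * m - 1) = 1 / x := by
      rw [eq_div_iff hx, ← pow_succ, (show 3 * m - 1 + 1 = 3 * m by omega), hx1]
    have f2 : x ^ (2 * m - 1) = x ^ m * x ^ m / x := by
      rw [eq_div_iff hx, ← pow_succ, (show 2 * m - 1 + 1 = m + m by omega), pow_add]
    have f3 : x ^ (m - 1) = x ^ m / x := by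
      rw [eq_div_iff hx, ← pow_succ, (show m - 1 + 1 = m by omega)]
    have p1 : x ^ (2 * m + 1) = x ^ m * x ^ m * x := by
      rw [(show 2 * m + 1 = m + m + 1 by ring), pow_succ, pow_add]
    have p2 : x ^ (m + 1) = x ^ m * x := pow_succ x m
    rw [hg, f1, f2, f3, p1, p2]
    field_simp
    ring
  intro i _
  -- the product identity for the zpow term
  have hzU : (γ ^ (3 * ((k : ℤ) - (i : ℤ)) + 1)) * γ ^ (3 * i) = γ ^ (3 * k + 1) := by
    rw [← zpow_natCast γ (3 * i), ← zpow_add, ← zpow_natCast γ (3 * k + 1)]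
    congr 1
    push_cast
    ring
  have hzF : ((γ ^ (3 * ((k : ℤ) - (i : ℤ)) + 1) : Fˣ) : F) * u ^ (3 * i) = u ^ (3 * k + 1) := by
    simpa only [Units.val_mul, Units.val_pow_eq_pow_val] using congrArg (Units.val) hzU
  refine ⟨?_, ?_, ?_⟩
  · -- g (u^(3i+2)) = u^(3i+2)
    have hx : u ^ (3 * i + 2) ≠ 0 := pow_ne_zero _ hu
    have hx1 : (u ^ (3 * i + 2)) ^ (3 * m) = 1 := by
      rw [← pow_mul, mul_comm, pow_mul, h1F, one_pow]
    have hxm : (u ^ (3 * i + 2)) ^ m = u ^ m * u ^ m := by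
      rw [← pow_mul, (show (3 * i + 2) * m = 3 * m * i + (m + m) by ring), pow_add, pow_mul,
        h1F, one_pow, one_mul, pow_add]
    rw [hD _ hx hx1, hxm, div_eq_iff hx]
    apply mul_left_cancel₀ h3
    linear_combination ha' + (u ^ (3 * i + 2)) ^ 2 * hf' + (u ^ m) ^ 2 * he' +
      (u ^ m) ^ 2 * (u ^ (3 * i + 2)) ^ 2 * hd' + (u ^ m) ^ 4 * hc' +
      (u ^ m) ^ 4 * (u ^ (3 * i + 2)) ^ 2 * hb' +
      (((u ^ (3 * i + 2)) ^ 2 - u ^ (3 * k + 1)) * ((u ^ m) ^ 3 + 2)) * hW3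
  · -- g (u^(3i)) = γ^(3(k-i)+1)
    have hx : u ^ (3 * i) ≠ 0 := pow_ne_zero _ hu
    have hx1 : (u ^ (3 * i)) ^ (3 * m) = 1 := by
      rw [← pow_mul, mul_comm, pow_mul, h1F, one_pow]
    have hxm : (u ^ (3 * i)) ^ m = 1 := by
      rw [← pow_mul, (show 3 * i * m = 3 * m * i by ring), pow_mul, h1F, one_pow]
    rw [hD _ hx hx1, hxm, div_eq_iff hx, hzF]
    apply mul_left_cancel₀ h3
    linear_combination ha' + (u ^ (3 * i)) ^ 2 * hf' + he' + (u ^ (3 * i)) ^ 2 * hd' + hc' +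
      (u ^ (3 * i)) ^ 2 * hb' + ((u ^ (3 * i)) ^ 2 - u ^ (3 * k + 1)) * hsum
  · -- g (γ^(3(k-i)+1)) = u^(3i)
    set ξ : Fˣ := γ ^ (3 * ((k : ℤ) - (i : ℤ)) + 1) with hξ_def
    have hxne : ((ξ : F)) ≠ 0 := Units.ne_zero ξ
    have hξ1 : ξ ^ (3 * m) = 1 := by
      rw [hξ_def, ← zpow_natCast (γ ^ (3 * ((k : ℤ) - (i : ℤ)) + 1)) (3 * m), ← zpow_mul,
        mul_comm, zpow_mul, zpow_natCast, hγ1, one_zpow]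
    have hx1 : ((ξ : F)) ^ (3 * m) = 1 := by
      rw [← Units.val_pow_eq_pow_val, hξ1, Units.val_one]
    have hξm : ξ ^ m = γ ^ m := by
      rw [hξ_def, ← zpow_natCast (γ ^ (3 * ((k : ℤ) - (i : ℤ)) + 1)) m, ← zpow_mul,
        (show (3 * ((k : ℤ) - (i : ℤ)) + 1) * (m : ℤ)
          = ((3 * m : ℕ) : ℤ) * ((k : ℤ) - (i : ℤ)) + ((m : ℕ) : ℤ) by push_cast; ring),
        zpow_add, zpow_mul, zpow_natCast, hγ1, one_zpow, one_mul, zpow_natCast]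
    have hxm : ((ξ : F)) ^ m = u ^ m := by
      rw [← Units.val_pow_eq_pow_val, hξm, Units.val_pow_eq_pow_val]
    have hprod : u ^ (3 * i) * (ξ : F) = u ^ (3 * k + 1) := by
      rw [mul_comm]; exact hzF
    rw [hD _ hxne hx1, hxm, div_eq_iff hxne, hprod]
    apply mul_left_cancel₀ h3
    linear_combination ha' + ((ξ : F)) ^ 2 * hf' + u ^ m * he' + u ^ m * ((ξ : F)) ^ 2 * hd' +
      (u ^ m) ^ 2 * hc' + (u ^ m) ^ 2 * ((ξ : F)) ^ 2 * hb' +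
      (((ξ : F)) ^ 2 - u ^ (3 * k + 1)) * hsum +
      ((((ξ : F)) ^ 2 - u ^ (3 * k + 1)) * u ^ m) * hW3
end
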